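/- For quadratic enhancements q, q' : V → ℤ/4 of the same nonsingular symmetric form λ with q'(x) = q(x) + i(λ(x,t)) for some fixed t ∈ V, the Brown-Kervaire invariants satisfy BK(V,λ,q) - BK(V,λ,q') = 2q(t) ∈ ℤ/8. -/
import Mathlib

private lemma Ipow_mod (m : ℕ) : Complex.I ^ m = Complex.I ^ (m % 4) := by
  conv_lhs => rw [← Nat.div_add_mod m 4]
  rw [pow_add, pow_mul, Complex.I_pow_four, one_pow, one_mul]

private lemma Ipow_add (a b : ZMod 4) :
    Complex.I ^ (a + b).val = Complex.I ^ a.val * Complex.I ^ b.val := by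
  rw [ZMod.val_add, ← Ipow_mod, pow_add]

private lemma exp_pi_half : Complex.exp ((Real.pi : ℂ) / 2 * Complex.I) = Complex.I := by
  rw [Complex.exp_mul_I]
  have : ((Real.pi : ℂ) / 2) = ((Real.pi / 2 : ℝ) : ℂ) := by push_cast; ring
  rw [this, ← Complex.ofReal_cos, ← Complex.ofReal_sin, Real.cos_pi_div_two, Real.sin_pi_div_two]
  simp

/-- If `q' x = q x + i (lam x t)` for quadratic enhancements `q, q'` of the same
nonsingular symmetric form `lam`, then the Brown-Kervaire invariants satisfy
`BK(V,lam,q) - BK(V,lam,q') = 2·q(t) ∈ ℤ/8`. -/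
theorem brown_kervaire_difference {V : Type} [AddCommGroup V] [Module (ZMod 2) V]
    [Fintype V] [FiniteDimensional (ZMod 2) V]
    (lam : LinearMap.BilinForm (ZMod 2) V)
    (hsymm : ∀ x y : V, lam x y = lam y x)
    (hnd : lam.Nondegenerate)
    (q q' : V → ZMod 4)
    (hq : ∀ x y : V, q (x + y) = q x + q y + 2 * ((lam x y).val : ZMod 4))
    (hq' : ∀ x y : V, q' (x + y) = q' x + q' y + 2 * ((lam x y).val : ZMod 4))
    (t : V)
    (ht : ∀ x : V, q' x = q x + 2 * ((lam x t).val : ZMod 4))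
    (b b' : ZMod 8)
    (hb : (∑ x : V, Complex.I ^ (q x).val)
        = ((Real.sqrt 2) ^ (Module.finrank (ZMod 2) V) : ℝ)
          * Complex.exp (2 * Real.pi * Complex.I * (b.val : ℂ) / 8))
    (hb' : (∑ x : V, Complex.I ^ (q' x).val)
        = ((Real.sqrt 2) ^ (Module.finrank (ZMod 2) V) : ℝ)
          * Complex.exp (2 * Real.pi * Complex.I * (b'.val : ℂ) / 8)) :
    b - b' = 2 * (((q t).val : ZMod 8)) := by
  set n := (q t).val with hn
  -- Key Gauss sum identity
  have key : (∑ x : V, Complex.I ^ (q' x).val) * Complex.I ^ n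
      = ∑ x : V, Complex.I ^ (q x).val := by
    rw [Finset.sum_mul]
    have h1 : ∀ x : V, Complex.I ^ (q' x).val * Complex.I ^ n
        = Complex.I ^ (q (x + t)).val := by
      intro x
      rw [hn, ← Ipow_add]
      congr 1
      rw [ht x, hq x t]; ring
    simp_rw [h1]
    exact Fintype.sum_equiv (Equiv.addRight t) _ _ (fun x => rfl)
  rw [hb, hb'] at key
  have hs : (((Real.sqrt 2) ^ (Module.finrank (ZMod 2) V) : ℝ) : ℂ) ≠ 0 := by
    norm_cast
    positivity
  have hE : Complex.exp (2 * Real.pi * Complex.I * (b'.val : ℂ) / 8) * Complex.I ^ n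
      = Complex.exp (2 * Real.pi * Complex.I * (b.val : ℂ) / 8) := by
    apply mul_left_cancel₀ hs
    rw [← key]; ring
  have hI : (Complex.I : ℂ) ^ n = Complex.exp (2 * Real.pi * Complex.I * (2 * n : ℂ) / 8) := by
    have harg : (2 * Real.pi * Complex.I * (2 * n : ℂ) / 8) = (n : ℂ) * ((Real.pi : ℂ) / 2 * Complex.I) := by
      ring
    rw [harg, Complex.exp_nat_mul, exp_pi_half]
  rw [hI, ← Complex.exp_add] at hE
  rw [Complex.exp_eq_exp_iff_exists_int] at hE
  obtain ⟨m, hm⟩ := hE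
  have hpi : (Real.pi : ℂ) ≠ 0 := by exact_mod_cast Real.pi_ne_zero
  have hInz := Complex.I_ne_zero
  have hC : ((b'.val : ℂ) + 2 * n) = (b.val : ℂ) + 8 * m := by
    have h2 : (2 * Real.pi * Complex.I) * (((b'.val : ℂ) + 2 * n) / 8)
        = (2 * Real.pi * Complex.I) * (((b.val : ℂ) + 8 * m) / 8) := by
      calc (2 * Real.pi * Complex.I) * (((b'.val : ℂ) + 2 * n) / 8)
          = 2 * Real.pi * Complex.I * (b'.val : ℂ) / 8 + 2 * Real.pi * Complex.I * (2 * n : ℂ) / 8 := by ring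
        _ = 2 * Real.pi * Complex.I * (b.val : ℂ) / 8 + m * (2 * Real.pi * Complex.I) := hm
        _ = (2 * Real.pi * Complex.I) * (((b.val : ℂ) + 8 * m) / 8) := by ring
    have h3 := mul_left_cancel₀ (by simp [hpi, hInz] : (2 * (Real.pi : ℂ) * Complex.I) ≠ 0) h2
    field_simp at h3
    exact h3
  have hZ : ((b'.val : ℤ) + 2 * n) = (b.val : ℤ) + 8 * m := by exact_mod_cast hC
  have hcast := congrArg (fun z : ℤ => (z : ZMod 8)) hZ
  push_cast at hcast
  have hb8 : ((b.val : ZMod 8)) = b := by simp [ZMod.natCast_val, ZMod.cast_id]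
  have hb'8 : ((b'.val : ZMod 8)) = b' := by simp [ZMod.natCast_val, ZMod.cast_id]
  rw [hb8, hb'8] at hcast
  have h8 : (8 : ZMod 8) = 0 := by decide
  rw [h8] at hcast
  linear_combination -hcast
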